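/- Given an n-qubit state ψ of the form ψ = λ Σ_{x∈A} i^{l(x)}(−1)^{q(x)}|x⟩ (λ ≠ 0, A affine, l linear, q quadratic over 𝔽₂, both depending only on a set F of free variables), there exist unique coefficients r_j ∈ ℤ₄ (j ∈ F) and s_{jk} ∈ ℤ₂ (j<k ∈ F) and a nonzero scalar μ such that ψ = μ Σ_{x∈A} i^{p(x)}|x⟩, where p(x) = Σ_{j∈F} r_j x_j + 2 Σ_{j<k∈F} s_{jk} x_j x_k is evaluated modulo 4. -/

import Mathlib

/-- `A` is a (nonempty) affine subspace of `𝔽₂ⁿ`: a coset of a linear subspace. -/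
def IsAffineSubspace {n : ℕ} (A : Set (Fin n → ZMod 2)) : Prop :=
  ∃ (W : Submodule (ZMod 2) (Fin n → ZMod 2)) (x₀ : Fin n → ZMod 2),
    A = (fun w => x₀ + w) '' (W : Set (Fin n → ZMod 2))

/-- `F` is a set of free variables for `A`: the projection onto the coordinates
indexed by `F`, restricted to `A`, is a bijection onto `𝔽₂^F`. -/
def IsFreeSet {n : ℕ} (A : Set (Fin n → ZMod 2)) (F : Finset (Fin n)) : Prop :=
  Set.BijOn (fun x (j : {k // k ∈ F}) => x j.1) A Set.univ

/-- Triangularity: every dependent variable `x_j` (`j ∉ F`) is, on `A`, an affine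
function of free variables of strictly smaller index. -/
def DependsOnlyBelow {n : ℕ} (A : Set (Fin n → ZMod 2)) (F : Finset (Fin n)) : Prop :=
  ∀ j ∉ F, ∃ (a : ZMod 2) (b : Fin n → ZMod 2),
    (∀ k, b k ≠ 0 → k ∈ F ∧ k < j) ∧ ∀ x ∈ A, x j = a + ∑ k, b k * x k

open Complex

/-!
Everything is moved into `ℤ/4` through `k ↦ iᵏ`. Since `i² = -1`, a sign `(-1)ᵇ` is `i^(2b)`,
and for bits the carry identity `a ⊕ b = a + b - 2ab ≡ a + b + 2ab (mod 4)` gives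
`i^l(x) = i^(Σ d_j x_j) · (-1)^(Σ_{j<k} d_j d_k x_j x_k)` with `l(x)` evaluated in `𝔽₂`;
collecting terms yields `r_j = d_j + 2c_j` and `s_jk = c_jk ⊕ d_j d_k`.

For uniqueness, if `λ i^p = μ i^p'` on `A`, the point of `A` with vanishing free coordinates
gives `λ = μ`, so `p = p'` on `A`. Phase polynomials supported on `F` depend only on the free
coordinates, and `A` projects onto all of `𝔽₂^F`, so `p = p'` everywhere; evaluating at `e_j`
and `e_j + e_k` recovers `r_j` and `s_jk`.
-/

def iPow (a : ZMod 4) : ℂ := I ^ a.val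

lemma I_pow_eq_iPow (m : ℕ) : I ^ m = iPow m := by
  rw [iPow, ZMod.val_natCast]
  conv_lhs => rw [← Nat.mod_add_div m 4]
  rw [pow_add, pow_mul, I_pow_four, one_pow, mul_one]

lemma iPow_add (a b : ZMod 4) : iPow (a + b) = iPow a * iPow b := by
  rw [← ZMod.natCast_zmod_val a, ← ZMod.natCast_zmod_val b, ← Nat.cast_add, ← I_pow_eq_iPow,
    ← I_pow_eq_iPow, ← I_pow_eq_iPow, pow_add]

lemma neg_one_pow_eq_iPow (m : ℕ) : (-1 : ℂ) ^ m = iPow (2 * m) := by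
  rw [← I_sq, ← pow_mul, I_pow_eq_iPow, Nat.cast_mul, Nat.cast_ofNat]

lemma iPow_injective : Function.Injective iPow := by
  intro a b h
  fin_cases a <;> fin_cases b <;>
    first
      | rfl
      | (exfalso; revert h; norm_num [iPow, ZMod.val, Complex.ext_iff, pow_succ])

def doubleLift : ZMod 2 →+ ZMod 4 :=
  AddMonoidHom.mk' (fun b => 2 * (b.val : ZMod 4)) (by decide)

lemma doubleLift_apply (b : ZMod 2) : doubleLift b = 2 * b.val := rfl

lemma doubleLift_injective : Function.Injective doubleLift := by decide +revert

lemma doubleLift_mul (a b : ZMod 2) : doubleLift (a * b) = doubleLift a * b.val := by decide +revert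

lemma natCast_val_mul (a b : ZMod 2) : ((a * b).val : ZMod 4) = a.val * b.val := by decide +revert

lemma natCast_val_add (a b : ZMod 2) :
    ((a + b).val : ZMod 4) = a.val + b.val + doubleLift (a * b) := by decide +revert

lemma natCast_val_sum {ι : Type*} [LinearOrder ι] (s : Finset ι) (t : ι → ZMod 2) :
    ((∑ i ∈ s, t i).val : ZMod 4) =
      ∑ i ∈ s, ((t i).val : ZMod 4) +
        doubleLift (∑ i ∈ s, ∑ j ∈ s with i < j, t i * t j) := by
  induction s using Finset.induction_on_max with
  | empty => simp
  | insert a s ha ih =>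
    have has : a ∉ s := fun h => lt_irrefl a (ha a h)
    have pairs : ∑ i ∈ insert a s, ∑ j ∈ insert a s with i < j, t i * t j
        = ∑ i ∈ s, ∑ j ∈ s with i < j, t i * t j + (∑ i ∈ s, t i) * t a := by
      have none_above : (insert a s).filter (a < ·) = ∅ :=
        Finset.filter_false_of_mem fun j hj => by
          rcases Finset.mem_insert.1 hj with rfl | hj
          exacts [lt_irrefl j, (ha j hj).not_gt]
      rw [Finset.sum_insert has, none_above, Finset.sum_empty, zero_add, Finset.sum_mul,
        ← Finset.sum_add_distrib]
      refine Finset.sum_congr rfl fun i hi => ?_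
      rw [Finset.filter_insert, if_pos (ha i hi),
        Finset.sum_insert fun h => has (Finset.mem_of_mem_filter a h), add_comm]
    rw [Finset.sum_insert has, Finset.sum_insert has, pairs, add_comm (t a), natCast_val_add, ih,
      map_add]
    ring

section

variable {ι : Type*} [Fintype ι] [LinearOrder ι]

def phase (r : ι → ZMod 4) (s : ι → ι → ZMod 2) (y : ι → ZMod 2) : ZMod 4 :=
  ∑ j, r j * (y j).val + doubleLift (∑ j, ∑ k with j < k, s j k * y j * y k)

lemma I_pow_eq_iPow_phase (r : ι → ZMod 4) (s : ι → ι → ZMod 2) (y : ι → ZMod 2) :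
    I ^ (∑ j, (r j).val * (y j).val + 2 * ∑ j, ∑ k ∈ Finset.univ.filter (fun k => j < k),
      (s j k).val * (y j).val * (y k).val) = iPow (phase r s y) := by
  rw [I_pow_eq_iPow, phase]
  congr 1
  simp only [map_sum, doubleLift_apply, natCast_val_mul]
  push_cast [ZMod.natCast_zmod_val, Finset.mul_sum]
  ring

lemma phase_zero (r : ι → ZMod 4) (s : ι → ι → ZMod 2) : phase r s 0 = 0 := by
  simp [phase]

lemma phase_single (r : ι → ZMod 4) (s : ι → ι → ZMod 2) (j : ι) :
    phase r s (Pi.single j 1) = r j := by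
  set y : ι → ZMod 2 := Pi.single j 1
  have lin : ∑ m, r m * (y m).val = r j := by
    rw [Fintype.sum_eq_single j fun m hm => by simp [y, hm]]
    simp only [y, Pi.single_eq_same, ZMod.val_one, Nat.cast_one, mul_one]
  have quad : ∑ m, ∑ k with m < k, s m k * y m * y k = 0 :=
    Finset.sum_eq_zero fun m _ => Finset.sum_eq_zero fun k hk => by
      by_cases hm : m = j
      · subst hm; simp [y, (Finset.mem_filter.1 hk).2.ne']
      · simp [y, hm]
  rw [phase, lin, quad, map_zero, add_zero]

lemma phase_single_add_single (r : ι → ZMod 4) (s : ι → ι → ZMod 2) {j k : ι}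
    (hjk : j < k) :
    phase r s (Pi.single j 1 + Pi.single k 1) = r j + r k + doubleLift (s j k) := by
  set y : ι → ZMod 2 := Pi.single j 1 + Pi.single k 1
  have hyj : y j = 1 := by simp [y, hjk.ne]
  have hyk : y k = 1 := by simp [y, hjk.ne']
  have hy : ∀ m, m ≠ j → m ≠ k → y m = 0 := fun m hj hk => by simp [y, hj, hk]
  have lin : ∑ m, r m * (y m).val = r j + r k := by
    rw [Fintype.sum_eq_add j k hjk.ne fun m ⟨hj, hk⟩ => by simp [hy m hj hk], hyj, hyk]
    simp only [ZMod.val_one, Nat.cast_one, mul_one]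
  have quad : ∑ m, ∑ l with m < l, s m l * y m * y l = s j k := by
    rw [Fintype.sum_eq_single j fun m hmj => Finset.sum_eq_zero fun l hl => ?_,
      Finset.sum_eq_single_of_mem k (Finset.mem_filter.2 ⟨Finset.mem_univ k, hjk⟩)
        fun l hl hlk => by simp [hy l (Finset.mem_filter.1 hl).2.ne' hlk],
      hyj, hyk, mul_one, mul_one]
    have hml := (Finset.mem_filter.1 hl).2
    by_cases hmk : m = k
    · subst hmk; simp [hy l (hjk.trans hml).ne' hml.ne']
    · simp [hy m hmj hmk]
  rw [phase, lin, quad]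

lemma phase_congr {F : Finset ι} {r : ι → ZMod 4} {s : ι → ι → ZMod 2}
    (hr : ∀ j, r j ≠ 0 → j ∈ F) (hs : ∀ j k, s j k ≠ 0 → j ∈ F ∧ k ∈ F)
    {y y' : ι → ZMod 2} (h : ∀ j ∈ F, y j = y' j) : phase r s y = phase r s y' := by
  unfold phase
  congr 1
  · refine Finset.sum_congr rfl fun j _ => ?_
    by_cases hj : r j = 0
    · simp [hj]
    · rw [h j (hr j hj)]
  · refine congrArg _ (Finset.sum_congr rfl fun j _ => Finset.sum_congr rfl fun k _ => ?_)
    by_cases hjk : s j k = 0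
    · simp [hjk]
    · rw [h j (hs j k hjk).1, h k (hs j k hjk).2]

lemma eq_of_phase_eq {r r' : ι → ZMod 4} {s s' : ι → ι → ZMod 2}
    (hs : ∀ j k, s j k ≠ 0 → j < k) (hs' : ∀ j k, s' j k ≠ 0 → j < k)
    (h : phase r s = phase r' s') : r = r' ∧ s = s' := by
  have hr : r = r' := funext fun j => by
    simpa only [phase_single] using congrFun h (Pi.single j 1)
  refine ⟨hr, funext₂ fun j k => ?_⟩
  by_cases hjk : j < k
  · apply doubleLift_injective
    have := congrFun h (Pi.single j 1 + Pi.single k 1)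
    rwa [phase_single_add_single _ _ hjk, phase_single_add_single _ _ hjk, hr,
      add_right_inj] at this
  · rw [not_imp_comm.1 (hs j k) hjk, not_imp_comm.1 (hs' j k) hjk]

def phaseLinCoeff (F : Finset ι) (d c₀ : ι → ZMod 2) (j : ι) : ZMod 4 :=
  if j ∈ F then (d j).val + doubleLift (c₀ j) else 0

def phaseQuadCoeff (F : Finset ι) (d : ι → ZMod 2) (c : ι → ι → ZMod 2) (j k : ι) :
    ZMod 2 :=
  if j ∈ F ∧ k ∈ F ∧ j < k then c j k + d j * d k else 0

lemma phase_phaseCoeff (F : Finset ι) (d c₀ : ι → ZMod 2) (c : ι → ι → ZMod 2)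
    (y : ι → ZMod 2) :
    phase (phaseLinCoeff F d c₀) (phaseQuadCoeff F d c) y =
      ((∑ j ∈ F, d j * y j).val : ZMod 4) +
        doubleLift
          (∑ j ∈ F, ∑ k ∈ F with j < k, c j k * y j * y k + ∑ j ∈ F, c₀ j * y j) := by
  have lin : ∑ j, phaseLinCoeff F d c₀ j * (y j).val =
      ∑ j ∈ F, ((d j * y j).val : ZMod 4) + doubleLift (∑ j ∈ F, c₀ j * y j) := by
    simp only [phaseLinCoeff, ite_mul, zero_mul, Finset.sum_ite_mem, Finset.univ_inter, map_sum,
      ← Finset.sum_add_distrib, natCast_val_mul, doubleLift_mul, add_mul]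
  have quad : ∑ j, ∑ k with j < k, phaseQuadCoeff F d c j k * y j * y k =
      ∑ j ∈ F, ∑ k ∈ F with j < k, c j k * y j * y k +
        ∑ j ∈ F, ∑ k ∈ F with j < k, (d j * y j) * (d k * y k) := by
    simp only [← Finset.sum_add_distrib, phaseQuadCoeff, ite_mul, zero_mul, Finset.sum_filter,
      ite_and]
    rw [← Finset.sum_subset F.subset_univ fun j _ hj => by simp [hj]]
    refine Finset.sum_congr rfl fun j hj => ?_
    rw [← Finset.sum_subset F.subset_univ fun k _ hk => by simp [hk]]
    refine Finset.sum_congr rfl fun k hk => ?_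
    split_ifs <;> ring
  rw [phase, lin, quad, natCast_val_sum, map_add, map_add]
  abel

end

lemma IsFreeSet.exists_mem_eqOn {n : ℕ} {A : Set (Fin n → ZMod 2)} {F : Finset (Fin n)}
    (hF : IsFreeSet A F) (y : Fin n → ZMod 2) : ∃ x ∈ A, ∀ j ∈ F, x j = y j := by
  obtain ⟨x, hx, hxy⟩ := hF.2.2 (Set.mem_univ fun j : {k // k ∈ F} => y j)
  exact ⟨x, hx, fun j hj => congrFun hxy ⟨j, hj⟩⟩

lemma phase_eq_of_mul_iPow_eq {n : ℕ} {A : Set (Fin n → ZMod 2)} {F : Finset (Fin n)}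
    (hF : IsFreeSet A F) {r r' : Fin n → ZMod 4} {s s' : Fin n → Fin n → ZMod 2}
    (hr : ∀ j, r j ≠ 0 → j ∈ F) (hs : ∀ j k, s j k ≠ 0 → j ∈ F ∧ k ∈ F)
    (hr' : ∀ j, r' j ≠ 0 → j ∈ F) (hs' : ∀ j k, s' j k ≠ 0 → j ∈ F ∧ k ∈ F)
    {lam mu : ℂ} (hlam : lam ≠ 0)
    (h : ∀ x ∈ A, lam * iPow (phase r s x) = mu * iPow (phase r' s' x)) :
    phase r s = phase r' s' := by
  obtain ⟨x₀, hx₀, hx₀F⟩ := hF.exists_mem_eqOn 0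
  have hmu : mu = lam := by
    simpa [phase_congr hr hs hx₀F, phase_congr hr' hs' hx₀F, phase_zero, iPow] using
      (h x₀ hx₀).symm
  funext y
  obtain ⟨x, hx, hxF⟩ := hF.exists_mem_eqOn y
  rw [← phase_congr hr hs hxF, ← phase_congr hr' hs' hxF]
  exact iPow_injective (mul_left_cancel₀ hlam (hmu ▸ h x hx))

theorem true_phase_polynomial_unique_general {n : ℕ} (A : Set (Fin n → ZMod 2))
    [DecidablePred (· ∈ A)]
    (F : Finset (Fin n)) (hF : IsFreeSet A F)
    (d : Fin n → ZMod 2) (c : Fin n → Fin n → ZMod 2) (c₀ : Fin n → ZMod 2)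
    (lam : ℂ) (hlam : lam ≠ 0)
    (ψ : (Fin n → ZMod 2) → ℂ)
    (hψ : ∀ y, ψ y = lam * (if y ∈ A then
        I ^ (∑ j ∈ F, d j * y j).val *
        (-1 : ℂ) ^ (∑ j ∈ F, ∑ k ∈ F.filter (fun k => j < k), c j k * y j * y k
            + ∑ j ∈ F, c₀ j * y j).val
      else 0)) :
    ∃! rs : (Fin n → ZMod 4) × (Fin n → Fin n → ZMod 2),
      (∀ j, rs.1 j ≠ 0 → j ∈ F) ∧
      (∀ j k, rs.2 j k ≠ 0 → j ∈ F ∧ k ∈ F ∧ j < k) ∧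
      ∃ mu : ℂ, mu ≠ 0 ∧ ∀ y, ψ y = mu * (if y ∈ A then
          I ^ (∑ j, (rs.1 j).val * (y j).val
              + 2 * ∑ j, ∑ k ∈ Finset.univ.filter (fun k => j < k),
                  (rs.2 j k).val * (y j).val * (y k).val)
        else 0) := by
  set r := phaseLinCoeff F d c₀
  set s := phaseQuadCoeff F d c
  have hr : ∀ j, r j ≠ 0 → j ∈ F := fun j => not_imp_comm.1 (if_neg ·)
  have hs : ∀ j k, s j k ≠ 0 → j ∈ F ∧ k ∈ F ∧ j < k :=
    fun j k => not_imp_comm.1 (if_neg ·)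
  have hψ' : ∀ y, ψ y = lam * (if y ∈ A then iPow (phase r s y) else 0) := fun y => by
    rw [hψ y, I_pow_eq_iPow, neg_one_pow_eq_iPow, ← iPow_add, phase_phaseCoeff,
      doubleLift_apply]
  refine ⟨(r, s), ⟨hr, hs, lam, hlam, fun y => by rw [hψ', I_pow_eq_iPow_phase]⟩, ?_⟩
  rintro ⟨r', s'⟩ ⟨hr', hs', mu, -, h'⟩
  have hphase := phase_eq_of_mul_iPow_eq hF hr (fun j k h => (hs j k h).imp_right And.left) hr'
    (fun j k h => (hs' j k h).imp_right And.left) hlam fun x hx => by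
      simpa only [if_pos hx, I_pow_eq_iPow_phase] using (hψ' x).symm.trans (h' x)
  obtain ⟨hr_eq, hs_eq⟩ := eq_of_phase_eq (fun j k h => (hs j k h).2.2)
    (fun j k h => (hs' j k h).2.2) hphase
  exact Prod.ext hr_eq.symm hs_eq.symm

theorem true_phase_polynomial_unique {n : ℕ} (A : Set (Fin n → ZMod 2))
    [DecidablePred (· ∈ A)]
    (hA : IsAffineSubspace A) (F : Finset (Fin n)) (hF : IsFreeSet A F)
    (d : Fin n → ZMod 2) (c : Fin n → Fin n → ZMod 2) (c₀ : Fin n → ZMod 2)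
    (lam : ℂ) (hlam : lam ≠ 0)
    (ψ : (Fin n → ZMod 2) → ℂ)
    (hψ : ∀ y, ψ y = lam * (if y ∈ A then
        I ^ (∑ j ∈ F, d j * y j).val *
        (-1 : ℂ) ^ (∑ j ∈ F, ∑ k ∈ F.filter (fun k => j < k), c j k * y j * y k
            + ∑ j ∈ F, c₀ j * y j).val
      else 0)) :
    ∃! rs : (Fin n → ZMod 4) × (Fin n → Fin n → ZMod 2),
      (∀ j, rs.1 j ≠ 0 → j ∈ F) ∧
      (∀ j k, rs.2 j k ≠ 0 → j ∈ F ∧ k ∈ F ∧ j < k) ∧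
      ∃ mu : ℂ, mu ≠ 0 ∧ ∀ y, ψ y = mu * (if y ∈ A then
          I ^ (∑ j, (rs.1 j).val * (y j).val
              + 2 * ∑ j, ∑ k ∈ Finset.univ.filter (fun k => j < k),
                  (rs.2 j k).val * (y j).val * (y k).val)
        else 0) :=
  true_phase_polynomial_unique_general A F hF d c c₀ lam hlam ψ hψ
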